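/- In the braid group B_4, the word σ1 σ1 σ2⁻¹ σ1 σ2⁻¹ σ1 σ3 σ2 σ2 σ2 σ3 (a braid representative of the knot 11n43) equals the product of the positive bands of its band decomposition with band centers {1, 2, 4, 6, 7, 8, 11}; in particular, this braid is quasipositive. -/

import Mathlib

/-- The Artin relations for the braid group with `m` generators
`σ_1, …, σ_m` (indexed by `Fin m`), i.e. the braid group `B_{m+1}`:
`σ_i σ_j = σ_j σ_i` for `|i - j| ≥ 2`, and
`σ_i σ_{i+1} σ_i = σ_{i+1} σ_i σ_{i+1}`. -/
def braidRels (m : ℕ) : Set (FreeGroup (Fin m)) :=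
  { r | (∃ i j : Fin m, (i : ℕ) + 2 ≤ (j : ℕ) ∧
          r = FreeGroup.of i * FreeGroup.of j * (FreeGroup.of i)⁻¹ * (FreeGroup.of j)⁻¹) ∨
        (∃ i j : Fin m, (i : ℕ) + 1 = (j : ℕ) ∧
          r = FreeGroup.of i * FreeGroup.of j * FreeGroup.of i *
              (FreeGroup.of j)⁻¹ * (FreeGroup.of i)⁻¹ * (FreeGroup.of j)⁻¹) }

/-- The braid group `B_{m+1}`, presented with `m` Artin generators.
Here index `i : Fin m` corresponds to the Artin generator `σ_{i+1}`. -/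
abbrev BraidGrp (m : ℕ) := PresentedGroup (braidRels m)

/-- The Artin generator `σ_{i+1}` of the braid group `B_{m+1}`. -/
def σ {m : ℕ} (i : Fin m) : BraidGrp m := PresentedGroup.of i

/-- A letter of a braid word: a generator index together with a sign
(`true` = the positive generator, `false` = its inverse). -/
abbrev Letter (m : ℕ) := Fin m × Bool

/-- The group element represented by a letter. -/
def letterEl {m : ℕ} (x : Letter m) : BraidGrp m :=
  if x.2 then σ x.1 else (σ x.1)⁻¹

/-- The group element represented by a braid word. -/
def wordProd {m : ℕ} (w : List (Letter m)) : BraidGrp m :=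
  (w.map letterEl).prod

/-- The band of the band decomposition of the word `w` with band centers `S`
(1-based positions) at center `p`: namely `α_p * x_p * α_p⁻¹`, where `x_p` is
the letter of `w` at position `p` and `α_p` is the product, in increasing
order of position, of the letters of `w` at positions `q < p` with `q ∉ S`. -/
def band {m : ℕ} (w : List (Letter m)) (S : List ℕ) (p : ℕ) : BraidGrp m :=
  let α : BraidGrp m :=
    wordProd (((w.zipIdx.map Prod.swap).filter fun qx => decide (qx.1 + 1 < p ∧ qx.1 + 1 ∉ S)).map Prod.snd)
  match w[p - 1]? with
  | some x => α * letterEl x * α⁻¹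
  | none => 1

/-- The product, in increasing order of band center, of the bands of the
band decomposition of the word `w` with band centers `S`. -/
def bandProd {m : ℕ} (w : List (Letter m)) (S : List ℕ) : BraidGrp m :=
  (S.map (band w S)).prod

/-- A positive band in the braid group: a conjugate `α σ_j α⁻¹` of a generator. -/
def IsPositiveBand {m : ℕ} (x : BraidGrp m) : Prop :=
  ∃ (α : BraidGrp m) (j : Fin m), x = α * σ j * α⁻¹

/-- A braid is quasipositive if it is a product of positive bands. -/
def IsQuasipositive {m : ℕ} (x : BraidGrp m) : Prop :=
  ∃ l : List (BraidGrp m), (∀ b ∈ l, IsPositiveBand b) ∧ x = l.prod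

/-- A negative band in the braid group: a conjugate `α σ_j⁻¹ α⁻¹` of the
inverse of a generator. -/
def IsNegativeBand {m : ℕ} (x : BraidGrp m) : Prop :=
  ∃ (α : BraidGrp m) (j : Fin m), x = α * (σ j)⁻¹ * α⁻¹

/-- A braid is quasinegative if it is a product of negative bands. -/
def IsQuasinegative {m : ℕ} (x : BraidGrp m) : Prop :=
  ∃ l : List (BraidGrp m), (∀ b ∈ l, IsNegativeBand b) ∧ x = l.prod

/-- The braid word for the knot `11n43` (letter `(i, true)` is `σ_(i+1)`,
`(i, false)` is `σ_(i+1)⁻¹`). -/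
def theWord : List (Letter 3) :=
  [(0, true), (0, true), (1, false), (0, true), (1, false), (0, true), (2, true), (1, true), (1, true), (1, true), (2, true)]

/-- The band centers. -/
def theCenters : List ℕ := [1, 2, 4, 6, 7, 8, 11]

/-!
Reading the band product left to right, the conjugators telescope: between consecutive band
centers `p < p'` the factor `α_p⁻¹ α_{p'}` is the run of non-center letters between them. Hence
for every increasing list of centers the word equals the band product followed by the product of
all its non-center letters. For this word and these centers the non-center letters are
`σ₂⁻¹ σ₂⁻¹ σ₂ σ₂`, which cancel already in the free group, and every center carries a positive
letter.
-/

section BandDecomposition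

variable {m : ℕ}

/-- The word spelling the conjugator `α_p` of `band w S p`. -/
def conjugatorWord (w : List (Letter m)) (S : List ℕ) (p : ℕ) : List (Letter m) :=
  ((w.zipIdx.map Prod.swap).filter fun qx => decide (qx.1 + 1 < p ∧ qx.1 + 1 ∉ S)).map Prod.snd

lemma wordProd_append (u v : List (Letter m)) : wordProd (u ++ v) = wordProd u * wordProd v := by
  simp only [wordProd, List.map_append, List.prod_append]

lemma band_eq_of_getElem? {w : List (Letter m)} {S : List ℕ} {p : ℕ} {x : Letter m}
    (h : w[p - 1]? = some x) :
    band w S p =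
      wordProd (conjugatorWord w S p) * letterEl x * (wordProd (conjugatorWord w S p))⁻¹ := by
  unfold band
  rw [h]
  rfl

lemma isPositiveBand_band {w : List (Letter m)} {S : List ℕ} {p : ℕ} {j : Fin m}
    (h : w[p - 1]? = some (j, true)) : IsPositiveBand (band w S p) :=
  ⟨_, j, by rw [band_eq_of_getElem? h]; rfl⟩

lemma isQuasipositive_bandProd {w : List (Letter m)} {S : List ℕ}
    (h : ∀ p ∈ S, ∃ j, w[p - 1]? = some (j, true)) : IsQuasipositive (bandProd w S) := by
  refine ⟨S.map (band w S), fun b hb => ?_, rfl⟩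
  obtain ⟨p, hp, rfl⟩ := List.mem_map.mp hb
  obtain ⟨j, hj⟩ := h p hp
  exact isPositiveBand_band hj

lemma conjugatorWord_one (w : List (Letter m)) (S : List ℕ) : conjugatorWord w S 1 = [] := by
  simp [conjugatorWord]

lemma conjugatorWord_append_cons (u v : List (Letter m)) (x : Letter m) (S : List ℕ) :
    conjugatorWord (u ++ x :: v) S (u.length + 2) =
      conjugatorWord (u ++ x :: v) S (u.length + 1) ++ if u.length + 1 ∈ S then [] else [x] := by
  have hu : ∀ p, u.length < p →
      (u.zipIdx.map Prod.swap).filter (fun qx => decide (qx.1 + 1 < p ∧ qx.1 + 1 ∉ S)) =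
        (u.zipIdx.map Prod.swap).filter (fun qx => decide (qx.1 + 1 ∉ S)) := by
    intro p hp
    refine List.filter_congr fun qx hqx => ?_
    obtain ⟨⟨y, q⟩, hmem, rfl⟩ := List.mem_map.mp hqx
    have hq : q < u.length := by simpa using (List.mem_zipIdx hmem).2.1
    exact decide_eq_decide.mpr ⟨And.right, fun h => ⟨by simp only [Prod.swap_prod_mk]; omega, h⟩⟩
  have hv : ∀ p, p ≤ u.length + 2 →
      ((v.zipIdx (u.length + 1)).map Prod.swap).filter
        (fun qx => decide (qx.1 + 1 < p ∧ qx.1 + 1 ∉ S)) = [] := by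
    intro p hp
    refine List.filter_eq_nil_iff.mpr fun qx hqx => ?_
    obtain ⟨⟨y, q⟩, hmem, rfl⟩ := List.mem_map.mp hqx
    have hq : u.length + 1 ≤ q := (List.mem_zipIdx hmem).1
    simp only [Prod.swap_prod_mk, decide_eq_true_eq]
    omega
  simp only [conjugatorWord, List.zipIdx_append, List.zipIdx_cons, zero_add, List.map_append,
    List.map_cons, List.filter_append, List.filter_cons, hu _ (Nat.lt_succ_self _),
    hu _ (by omega : u.length < u.length + 2), hv _ le_rfl, hv _ (Nat.le_succ _),
    Prod.swap_prod_mk]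
  by_cases hS : u.length + 1 ∈ S <;> simp [hS]

lemma conjugatorWord_add_two (w : List (Letter m)) (S : List ℕ) {n : ℕ} (hn : n < w.length) :
    conjugatorWord w S (n + 2) =
      conjugatorWord w S (n + 1) ++ if n + 1 ∈ S then [] else [w[n]] := by
  have hsplit : w.take n ++ w[n] :: w.drop (n + 1) = w := by simp
  have := conjugatorWord_append_cons (w.take n) (w.drop (n + 1)) w[n] S
  rwa [List.length_take_of_le hn.le, hsplit] at this

theorem wordProd_take_eq_bands_mul (w : List (Letter m)) (S : List ℕ) {n : ℕ}
    (hn : n ≤ w.length) :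
    wordProd (w.take n) = (((List.range' 1 n).filter (· ∈ S)).map (band w S)).prod *
      wordProd (conjugatorWord w S (n + 1)) := by
  induction n with
  | zero => simp [conjugatorWord_one, wordProd]
  | succ n ih =>
    have hn' : n < w.length := hn
    have hband := band_eq_of_getElem? (S := S) (p := n + 1) (List.getElem?_eq_getElem hn')
    rw [← List.take_append_getElem hn', wordProd_append, ih hn'.le, conjugatorWord_add_two w S hn',
      List.range'_1_concat, List.filter_append]
    by_cases hS : n + 1 ∈ S
    · simp [hS, add_comm 1 n, hband, wordProd, mul_assoc]
    · simp [hS, add_comm 1 n, wordProd, mul_assoc]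

/-- `(List.range' 1 w.length).filter (· ∈ S) = S` says that `S` lists positions of `w` in
strictly increasing order. -/
theorem wordProd_eq_bandProd_mul (w : List (Letter m)) (S : List ℕ)
    (hS : (List.range' 1 w.length).filter (· ∈ S) = S) :
    wordProd w = bandProd w S * wordProd (conjugatorWord w S (w.length + 1)) := by
  simpa [hS, bandProd] using wordProd_take_eq_bands_mul w S le_rfl

end BandDecomposition

/-- The braid representative of `11n43` equals the product of the bands of its
band decomposition with the given band centers; in particular it is quasipositive. -/
theorem knot_11n43_quasipositive :
    wordProd theWord = bandProd theWord theCenters ∧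
      IsQuasipositive (wordProd theWord) := by
  have hcenters : (List.range' 1 theWord.length).filter (· ∈ theCenters) = theCenters := by decide
  have hcancel : wordProd (conjugatorWord theWord theCenters (theWord.length + 1)) = 1 := by
    have : conjugatorWord theWord theCenters (theWord.length + 1) =
        [(1, false), (1, false), (1, true), (1, true)] := by decide
    simp [this, wordProd, letterEl]
  have hdecomp : wordProd theWord = bandProd theWord theCenters := by
    rw [wordProd_eq_bandProd_mul theWord theCenters hcenters, hcancel, mul_one]
  exact ⟨hdecomp, hdecomp ▸ isQuasipositive_bandProd (by decide)⟩
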